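/- arXiv:2502.21001 — 2 statements merged into one kernel-verified Lean document; each statement's English description precedes it below -/
import Mathlib

section
/- Let (E,δ) be a metric space, L ∈ [0,∞), and let M ⊆ E be nonempty. Let f : E → ℝ satisfy |f(x) − f(y)| ≤ L·δ(x,y) for all x ∈ E and y ∈ M. Define F : E → ℝ by F(x) = sup_{y∈M} (f(y) − L·δ(x,y)) (the supremum is finite since f(y) − L·δ(x,y) ≤ f(x) for all y ∈ M). Then for every x ∈ E, |F(x) − f(x)| ≤ 2L · inf_{y∈M} δ(x,y). -/
/-! The bound `f y - L δ(x,y) ≤ f x` makes `f x` an upper bound of the supremum, while the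
reverse bound `f x - L δ(x,y) ≤ f y` gives `f x - 2L δ(x,y) ≤ F x` for every `y ∈ M`;
taking the infimum over `y` yields the claim. -/

section MaxConvolution

variable {E : Type*} [PseudoMetricSpace E] (f : E → ℝ) (L : ℝ) (M : Set E)

noncomputable def maxConv (x : E) : ℝ :=
  ⨆ y : M, (f y - L * dist x (y : E))

variable {f L M}

theorem maxConv_le [Nonempty M] {x : E} (hf : ∀ y ∈ M, f y - f x ≤ L * dist x y) :
    maxConv f L M x ≤ f x :=
  ciSup_le fun y => by linarith [hf y y.2]

theorem bddAbove_range_maxConv {x : E} (hf : ∀ y ∈ M, f y - f x ≤ L * dist x y) :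
    BddAbove (Set.range fun y : M => f y - L * dist x (y : E)) :=
  ⟨f x, by rintro _ ⟨y, rfl⟩; linarith [hf y y.2]⟩

theorem sub_le_maxConv {x : E} (hf_le : ∀ y ∈ M, f y - f x ≤ L * dist x y)
    (hf_ge : ∀ y ∈ M, f x - f y ≤ L * dist x y) {y : E} (hy : y ∈ M) :
    f x - 2 * L * dist x y ≤ maxConv f L M x :=
  calc f x - 2 * L * dist x y ≤ f y - L * dist x y := by linarith [hf_ge y hy]
    _ ≤ maxConv f L M x := le_ciSup (bddAbove_range_maxConv hf_le) (⟨y, hy⟩ : M)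

theorem sub_maxConv_le_mul_iInf_dist [Nonempty M] (hL : 0 ≤ L) {x : E}
    (hf_le : ∀ y ∈ M, f y - f x ≤ L * dist x y)
    (hf_ge : ∀ y ∈ M, f x - f y ≤ L * dist x y) :
    f x - maxConv f L M x ≤ 2 * L * ⨅ y : M, dist x (y : E) := by
  rw [Real.mul_iInf_of_nonneg (by positivity)]
  exact le_ciInf fun y => by linarith [sub_le_maxConv hf_le hf_ge y.2]

end MaxConvolution

/-- Maximum-convolution approximation: if `f` is one-sidedly `L`-Lipschitz relative to a
nonempty set `M`, then `F x = sup_{y ∈ M} (f y − L · δ(x,y))` satisfies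
`|F x − f x| ≤ 2L · inf_{y ∈ M} δ(x,y)` for every `x`. -/
theorem maxConv_approx {E : Type*} [MetricSpace E] (L : ℝ) (hL : 0 ≤ L)
    (M : Set E) (hM : M.Nonempty) (f : E → ℝ)
    (hf : ∀ x : E, ∀ y ∈ M, |f x - f y| ≤ L * dist x y) :
    ∀ x : E,
      |(⨆ y : M, (f y - L * dist x (y : E))) - f x| ≤ 2 * L * ⨅ y : M, dist x (y : E) := by
  intro x
  have : Nonempty M := hM.to_subtype
  have hf_le : ∀ y ∈ M, f y - f x ≤ L * dist x y := fun y hy =>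
    (abs_sub_le_iff.mp (hf x y hy)).2
  have hf_ge : ∀ y ∈ M, f x - f y ≤ L * dist x y := fun y hy =>
    (abs_sub_le_iff.mp (hf x y hy)).1
  have hbound_nonneg : 0 ≤ 2 * L * ⨅ y : M, dist x (y : E) :=
    mul_nonneg (by positivity) (le_ciInf fun _ => dist_nonneg)
  change |maxConv f L M x - f x| ≤ _
  rw [abs_sub_le_iff]
  exact ⟨by linarith [maxConv_le hf_le], sub_maxConv_le_mul_iInf_dist hL hf_le hf_ge⟩
end

section
/- (Approximation within the n-bit quantization tolerance requires at most exponentially many pieces in n.) Let d ≥ 1, L ∈ [0,∞), a ∈ ℝ, b ∈ (a,∞), n ≥ 1 a natural number, and let f : [a,b]^d → ℝ satisfy |f(u) − f(v)| ≤ L‖u − v‖₁ for all u, v ∈ [a,b]^d. Then there exist K ∈ ℕ with 1 ≤ K ≤ (max{1, ⌈ 2dL(b − a)(2^n − 1) ⌉})^d and points x_1, …, x_K ∈ [a,b]^d such that sup_{x∈[a,b]^d} | max_{1≤k≤K} (f(x_k) − L‖x − x_k‖₁) − f(x) | ≤ 1/(2(2^n − 1)) = ε(n). In particular, the number of pieces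 needed to reach the error ceiling ε(n) grows at most like (2^{n+1} − 2)^d up to a constant depending on d, L, a, b. -/
/-!
Cut `[a,b]` into `M` cells of width `h = (b - a)/M` and take the `M^d` centres of the product
cells. By the Lipschitz bound every cone `f(x_k) - L‖x - x_k‖₁` lies below `f`, so the maximum
convolution never exceeds `f`; and the centre nearest to `x` is within ℓ1-distance `d h/2`,
so the maximum falls short of `f x` by at most `2 L (d h/2) = L d (b - a)/M`. Choosing
`M ≥ 2 d L (b - a)(2^n - 1)` makes this at most `ε(n)`.
-/

open Set

theorem abs_maxConv_sub_le {ι X : Type*} [Finite ι] {f : X → ℝ} {ρ : X → X → ℝ} {L : ℝ}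
    {p : ι → X} {x : X} (hf : ∀ k, |f x - f (p k)| ≤ L * ρ x (p k)) (k₀ : ι) :
    |(⨆ k, (f (p k) - L * ρ x (p k))) - f x| ≤ 2 * L * ρ x (p k₀) := by
  have : Nonempty ι := ⟨k₀⟩
  have hle : (⨆ k, (f (p k) - L * ρ x (p k))) ≤ f x :=
    ciSup_le fun k => by linarith [neg_abs_le (f x - f (p k)), hf k]
  have hge : f (p k₀) - L * ρ x (p k₀) ≤ ⨆ k, (f (p k) - L * ρ x (p k)) :=
    le_ciSup (f := fun k => f (p k) - L * ρ x (p k)) (Set.finite_range _).bddAbove k₀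
  have hk₀ := hf k₀
  rw [abs_le] at hk₀ ⊢
  constructor <;> linarith

theorem exists_lt_abs_sub_add_half_le {t : ℝ} {M : ℕ} (hM : 0 < M) (ht₀ : 0 ≤ t)
    (htM : t ≤ M) : ∃ j < M, |t - (j + 1 / 2)| ≤ 1 / 2 := by
  suffices ∃ j < M, (j : ℝ) ≤ t ∧ t ≤ j + 1 by
    obtain ⟨j, hjM, hjt, htj⟩ := this
    exact ⟨j, hjM, abs_le.2 ⟨by linarith, by linarith⟩⟩
  rcases htM.lt_or_eq with htM | rfl
  · exact ⟨⌊t⌋₊, (Nat.floor_lt ht₀).2 htM, Nat.floor_le ht₀, (Nat.lt_floor_add_one t).le⟩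
  · refine ⟨M - 1, Nat.sub_lt hM one_pos, ?_, ?_⟩ <;>
      simp [Nat.cast_sub (Nat.one_le_iff_ne_zero.2 hM.ne')]

noncomputable def cellCenter (a h : ℝ) (j : ℕ) : ℝ := a + (j + 1 / 2) * h

theorem cellCenter_mem_Icc {a h : ℝ} (hh : 0 ≤ h) {M j : ℕ} (hj : j < M) :
    cellCenter a h j ∈ Icc a (a + M * h) := by
  have hjM : (j : ℝ) + 1 ≤ M := by exact_mod_cast hj
  constructor <;> unfold cellCenter <;> nlinarith

theorem exists_lt_abs_sub_cellCenter_le {a h x : ℝ} (hh : 0 < h) {M : ℕ} (hM : 0 < M)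
    (hx : x ∈ Icc a (a + M * h)) : ∃ j < M, |x - cellCenter a h j| ≤ h / 2 := by
  obtain ⟨j, hjM, hj⟩ := exists_lt_abs_sub_add_half_le (t := (x - a) / h) hM
    (div_nonneg (by linarith [hx.1]) hh.le) ((div_le_iff₀ hh).2 (by linarith [hx.2]))
  refine ⟨j, hjM, ?_⟩
  have hxc : x - cellCenter a h j = ((x - a) / h - (j + 1 / 2)) * h := by
    unfold cellCenter; field_simp; ring
  rw [hxc, abs_mul, abs_of_pos hh]
  nlinarith

noncomputable def gridPoint (a h : ℝ) {M d : ℕ} (k : Fin (M ^ d)) : Fin d → ℝ :=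
  fun i => cellCenter a h (finFunctionFinEquiv.symm k i)

theorem gridPoint_mem_Icc {a h : ℝ} (hh : 0 ≤ h) {M d : ℕ} (k : Fin (M ^ d)) (i : Fin d) :
    gridPoint a h k i ∈ Icc a (a + M * h) :=
  cellCenter_mem_Icc hh (finFunctionFinEquiv.symm k i).2

theorem exists_sum_abs_sub_gridPoint_le {a h : ℝ} (hh : 0 < h) {M d : ℕ} (hM : 0 < M)
    {x : Fin d → ℝ} (hx : ∀ i, x i ∈ Icc a (a + M * h)) :
    ∃ k : Fin (M ^ d), ∑ i, |x i - gridPoint a h k i| ≤ d * (h / 2) := by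
  choose j hjM hj using fun i => exists_lt_abs_sub_cellCenter_le hh hM (hx i)
  refine ⟨finFunctionFinEquiv fun i => ⟨j i, hjM i⟩, ?_⟩
  calc ∑ i, |x i - gridPoint a h (finFunctionFinEquiv fun i => ⟨j i, hjM i⟩) i|
      ≤ ∑ _i : Fin d, h / 2 := Finset.sum_le_sum fun i _ => by simpa [gridPoint] using hj i
    _ = d * (h / 2) := by simp

theorem maxConv_quantization_tolerance_general (d : ℕ) (L : ℝ) (hL : 0 ≤ L)
    (a b : ℝ) (hab : a < b) (n : ℕ) (hn : 1 ≤ n) (f : (Fin d → ℝ) → ℝ)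
    (hf : ∀ u, (∀ i, u i ∈ Set.Icc a b) → ∀ v, (∀ i, v i ∈ Set.Icc a b) →
      |f u - f v| ≤ L * ∑ i, |u i - v i|) :
    ∃ K : ℕ, 1 ≤ K ∧
      K ≤ (max 1 ⌈2 * (d : ℝ) * L * (b - a) * ((2 : ℝ) ^ n - 1)⌉₊) ^ d ∧
      ∃ pts : Fin K → (Fin d → ℝ), (∀ k, ∀ i, pts k i ∈ Set.Icc a b) ∧
        ∀ x : Fin d → ℝ, (∀ i, x i ∈ Set.Icc a b) →
          |(⨆ k : Fin K, (f (pts k) - L * ∑ i, |x i - pts k i|)) - f x| ≤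
            1 / (2 * ((2 : ℝ) ^ n - 1)) := by
  set M := max 1 ⌈2 * (d : ℝ) * L * (b - a) * ((2 : ℝ) ^ n - 1)⌉₊
  have hM : 0 < M := lt_max_of_lt_left one_pos
  have hM' : (0 : ℝ) < M := by exact_mod_cast hM
  have hMge : 2 * (d : ℝ) * L * (b - a) * ((2 : ℝ) ^ n - 1) ≤ M :=
    (Nat.le_ceil _).trans (Nat.cast_le.2 (le_max_right _ _))
  have hpow : (1 : ℝ) ≤ 2 ^ n - 1 := by
    linarith [pow_le_pow_right₀ (by norm_num : (1 : ℝ) ≤ 2) hn, pow_one (2 : ℝ)]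
  set h := (b - a) / M
  have hh : 0 < h := div_pos (sub_pos.2 hab) hM'
  have hb : a + M * h = b := by simp only [h]; field_simp; ring
  have hIcc (k : Fin (M ^ d)) (i : Fin d) : gridPoint a h k i ∈ Icc a b :=
    hb ▸ gridPoint_mem_Icc hh.le k i
  refine ⟨M ^ d, Nat.one_le_pow _ _ hM, le_rfl, gridPoint a h, fun k i => ?_, fun x hx => ?_⟩
  · exact hIcc k i
  obtain ⟨k, hk⟩ := exists_sum_abs_sub_gridPoint_le hh hM (by rwa [hb])
  calc _ ≤ 2 * L * ∑ i, |x i - gridPoint a h k i| :=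
        abs_maxConv_sub_le (ρ := fun u v : Fin d → ℝ => ∑ i, |u i - v i|) (fun k => hf x hx _ (hIcc k)) k
    _ ≤ 2 * L * (d * (h / 2)) := by gcongr
    _ = d * L * (b - a) / M := by simp only [h]; ring
    _ ≤ 1 / (2 * ((2 : ℝ) ^ n - 1)) := by
        rw [div_le_div_iff₀ hM' (by positivity)]; linarith

/-- Approximation within the `n`-bit quantization tolerance `ε(n) = 1/(2(2^n − 1))` needs
at most `(max{1, ⌈2dL(b−a)(2^n − 1)⌉})^d` pieces: there are that many centers in `[a,b]^d`
whose maximum convolution approximates an ℓ1-`L`-Lipschitz `f` uniformly within `ε(n)`. -/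
theorem maxConv_quantization_tolerance (d : ℕ) (hd : 1 ≤ d) (L : ℝ) (hL : 0 ≤ L)
    (a b : ℝ) (hab : a < b) (n : ℕ) (hn : 1 ≤ n) (f : (Fin d → ℝ) → ℝ)
    (hf : ∀ u, (∀ i, u i ∈ Set.Icc a b) → ∀ v, (∀ i, v i ∈ Set.Icc a b) →
      |f u - f v| ≤ L * ∑ i, |u i - v i|) :
    ∃ K : ℕ, 1 ≤ K ∧
      K ≤ (max 1 ⌈2 * (d : ℝ) * L * (b - a) * ((2 : ℝ) ^ n - 1)⌉₊) ^ d ∧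
      ∃ pts : Fin K → (Fin d → ℝ), (∀ k, ∀ i, pts k i ∈ Set.Icc a b) ∧
        ∀ x : Fin d → ℝ, (∀ i, x i ∈ Set.Icc a b) →
          |(⨆ k : Fin K, (f (pts k) - L * ∑ i, |x i - pts k i|)) - f x| ≤
            1 / (2 * ((2 : ℝ) ^ n - 1)) :=
  maxConv_quantization_tolerance_general d L hL a b hab n hn f hf
end
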